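/- Define Λ_fKdV(κ;σ) = 2·κ^{4σ}·σ·(1+σ)⁴·(2^{σ+1} − 3 − σ)/(2^σ − 1) for κ > 0 and σ > 1/2. Then for every κ > 0: Λ_fKdV(κ;σ) < 0 whenever 1/2 < σ < 1; Λ_fKdV(κ;1) = 0; and Λ_fKdV(κ;σ) > 0 whenever σ > 1. -/
import Mathlib


/-- The modulational instability index of the fractional KdV equation:
`Λ_fKdV(κ;σ) = 2κ^{4σ}σ(1+σ)⁴(2^{σ+1} − 3 − σ)/(2^σ − 1)`. -/
noncomputable def LambdafKdV (κ σ : ℝ) : ℝ :=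
  2 * κ ^ (4 * σ) * σ * (1 + σ) ^ 4 * ((2 : ℝ) ^ (σ + 1) - 3 - σ) / ((2 : ℝ) ^ σ - 1)

lemma two_rpow_eq_exp (σ : ℝ) : (2 : ℝ) ^ σ = Real.exp (Real.log 2 * σ) :=
  Real.rpow_def_of_pos (by norm_num) σ

lemma chord_lt (σ : ℝ) (h1 : 1 / 2 < σ) (h2 : σ < 1) :
    (2 : ℝ) ^ (σ + 1) - 3 - σ < 0 := by
  have hne : Real.log 2 * (1 / 2) ≠ Real.log 2 * 1 := by
    have h2pos : (0 : ℝ) < Real.log 2 := Real.log_pos (by norm_num)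
    intro h
    have : (1 / 2 : ℝ) = 1 := mul_left_cancel₀ (ne_of_gt h2pos) h
    norm_num at this
  have ha : (0 : ℝ) < 2 * (1 - σ) := by linarith
  have hb : (0 : ℝ) < 2 * σ - 1 := by linarith
  have hab : 2 * (1 - σ) + (2 * σ - 1) = 1 := by ring
  have key := strictConvexOn_exp.2 (Set.mem_univ (Real.log 2 * (1 / 2)))
    (Set.mem_univ (Real.log 2 * 1)) hne ha hb hab
  have hcomb : (2 * (1 - σ)) • (Real.log 2 * (1 / 2)) + (2 * σ - 1) • (Real.log 2 * 1)
      = Real.log 2 * σ := by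
    simp only [smul_eq_mul]; ring
  rw [hcomb] at key
  have hhalf : Real.exp (Real.log 2 * (1 / 2)) = Real.sqrt 2 := by
    rw [Real.sqrt_eq_rpow, two_rpow_eq_exp]
  have hone : Real.exp (Real.log 2 * 1) = 2 := by
    rw [mul_one, Real.exp_log]; norm_num
  rw [hhalf, hone] at key
  have hσ : (2 : ℝ) ^ σ < (2 * (1 - σ)) * Real.sqrt 2 + (2 * σ - 1) * 2 := by
    rw [two_rpow_eq_exp]; simpa [smul_eq_mul] using key
  have hsum : (2 : ℝ) ^ (σ + 1) = 2 ^ σ * 2 := by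
    rw [Real.rpow_add (by norm_num), Real.rpow_one]
  have hs2 : Real.sqrt 2 ^ 2 = 2 := Real.sq_sqrt (by norm_num)
  have hs0 : (0 : ℝ) ≤ Real.sqrt 2 := Real.sqrt_nonneg 2
  nlinarith [hσ, hs2, hs0, sq_nonneg (Real.sqrt 2 - 1), sq_nonneg (4 * Real.sqrt 2 - 7)]

lemma tangent_gt (σ : ℝ) (h1 : 1 < σ) :
    0 < (2 : ℝ) ^ (σ + 1) - 3 - σ := by
  have hlog : (0.6931471803 : ℝ) < Real.log 2 := Real.log_two_gt_d9
  have hpos : (0 : ℝ) < Real.log 2 * (σ - 1) := by nlinarith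
  have key := Real.add_one_lt_exp (ne_of_gt hpos)
  have hsplit : (2 : ℝ) ^ (σ + 1) = 4 * Real.exp (Real.log 2 * (σ - 1)) := by
    rw [two_rpow_eq_exp]
    have h1' : Real.log 2 * (σ + 1) = Real.log 2 * (σ - 1) + (Real.log 2 + Real.log 2) := by
      ring
    rw [h1', Real.exp_add, Real.exp_add, Real.exp_log (by norm_num : (0:ℝ) < 2)]
    ring
  rw [hsplit]
  nlinarith [key, hlog, h1]

theorem LambdafKdV_sign (κ : ℝ) (hκ : 0 < κ) :
    (∀ σ : ℝ, 1 / 2 < σ → σ < 1 → LambdafKdV κ σ < 0) ∧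
    LambdafKdV κ 1 = 0 ∧
    (∀ σ : ℝ, 1 < σ → 0 < LambdafKdV κ σ) := by
  have hden : ∀ σ : ℝ, 1 / 2 < σ → (0 : ℝ) < (2 : ℝ) ^ σ - 1 := by
    intro σ hσ
    have : (1 : ℝ) < (2 : ℝ) ^ σ :=
      (Real.one_lt_rpow_iff_of_pos (by norm_num)).2 (Or.inl ⟨by norm_num, by linarith⟩)
    linarith
  have hpos : ∀ σ : ℝ, 1 / 2 < σ → 0 < 2 * κ ^ (4 * σ) * σ * (1 + σ) ^ 4 := by
    intro σ hσ
    have h1 : (0 : ℝ) < κ ^ (4 * σ) := Real.rpow_pos_of_pos hκ _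
    have h2 : (0 : ℝ) < σ := by linarith
    positivity
  refine ⟨?_, ?_, ?_⟩
  · intro σ h1 h2
    have hnum := chord_lt σ h1 h2
    exact div_neg_of_neg_of_pos (mul_neg_of_pos_of_neg (hpos σ h1) hnum) (hden σ h1)
  · unfold LambdafKdV
    have h4 : (2 : ℝ) ^ ((1 : ℝ) + 1) = 4 := by
      rw [show (1 : ℝ) + 1 = ((2 : ℕ) : ℝ) by norm_num, Real.rpow_natCast]; norm_num
    rw [h4]; norm_num
  · intro σ h1
    have hnum := tangent_gt σ h1
    exact div_pos (mul_pos (hpos σ (by linarith)) hnum) (hden σ (by linarith))
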